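/- arXiv:1506.08385 — 5 statements merged into one kernel-verified Lean document; each statement's English description precedes it below -/
import Mathlib

section
/- Let B be a Serre subcategory of an abelian category A, with inclusion f* : B → A. If f* has a right adjoint f_*, then for every object F of A the counit morphism f* f_* F → F is a monomorphism. -/
/-!
STATEMENT 2: Let B be a Serre subcategory of an abelian category A, with
(fully faithful, additive) inclusion f* : B ⥤ A.  If f* has a right adjoint
f_*, then for every object F of A the counit morphism f* f_* F ⟶ F is a
monomorphism.

The Serre subcategory condition is expressed by saying that the essential
image of the inclusion is closed under subobjects, quotients and extensions.
-/

open CategoryTheory CategoryTheory.Limits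

theorem stmt_2 {A : Type*} {B : Type*} [Category A] [Abelian A]
    [Category B] [Preadditive B]
    (ι : B ⥤ A) [ι.Full] [ι.Faithful] [ι.Additive]
    -- closed under subobjects
    (hsub : ∀ (X : A) (b : B) (i : X ⟶ ι.obj b), Mono i →
      ∃ b' : B, Nonempty (X ≅ ι.obj b'))
    -- closed under quotients
    (hquot : ∀ (X : A) (b : B) (q : ι.obj b ⟶ X), Epi q →
      ∃ b' : B, Nonempty (X ≅ ι.obj b'))
    -- closed under extensions
    (hext : ∀ (S : ShortComplex A), S.ShortExact →
      (∃ b₁ : B, Nonempty (S.X₁ ≅ ι.obj b₁)) →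
      (∃ b₃ : B, Nonempty (S.X₃ ≅ ι.obj b₃)) →
      ∃ b₂ : B, Nonempty (S.X₂ ≅ ι.obj b₂))
    (fstar : A ⥤ B) (adj : ι ⊣ fstar) (F : A) :
    Mono (adj.counit.app F) := by
  set ε := adj.counit.app F with hε
  -- The kernel of ε is a subobject of ι (fstar F), hence in the image of ι.
  obtain ⟨b', ⟨e⟩⟩ := hsub (kernel ε) (fstar.obj F) (kernel.ι ε) inferInstance
  apply Abelian.mono_of_kernel_ι_eq_zero
  -- The map k' : ι b' ⟶ ι (fstar F) with k' ≫ ε = 0 must be zero.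
  set k' : ι.obj b' ⟶ ι.obj (fstar.obj F) := e.inv ≫ kernel.ι ε with hk'
  have hk0 : k' ≫ ε = 0 := by simp [hk']
  have hfull : k' = ι.map (ι.preimage k') := (ι.map_preimage k').symm
  have h0 : ι.preimage k' = 0 := by
    apply (adj.homEquiv b' F).symm.injective
    simp only [Adjunction.homEquiv_counit, ← hfull, ← hε, hk0, Functor.map_zero, zero_comp]
  have : k' = 0 := by rw [hfull, h0, ι.map_zero]
  calc kernel.ι ε = e.hom ≫ k' := by simp [hk']
    _ = 0 := by rw [this, comp_zero]
end

section
/- Let B be a Serre subcategory of an abelian category A, with inclusion f* : B → A. If f* has a left adjoint f_!, then for every object F of A the unit morphism F → f* f_! F is an epimorphism. -/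
/-!
STATEMENT 3: Let B be a Serre subcategory of an abelian category A, with
(fully faithful, additive) inclusion f* : B ⥤ A.  If f* has a left adjoint
f_!, then for every object F of A the unit morphism F ⟶ f* f_! F is an
epimorphism.
-/

open CategoryTheory CategoryTheory.Limits

theorem stmt_3 {A : Type*} {B : Type*} [Category A] [Abelian A]
    [Category B] [Preadditive B]
    (ι : B ⥤ A) [ι.Full] [ι.Faithful] [ι.Additive]
    -- closed under subobjects
    (hsub : ∀ (X : A) (b : B) (i : X ⟶ ι.obj b), Mono i →
      ∃ b' : B, Nonempty (X ≅ ι.obj b'))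
    -- closed under quotients
    (hquot : ∀ (X : A) (b : B) (q : ι.obj b ⟶ X), Epi q →
      ∃ b' : B, Nonempty (X ≅ ι.obj b'))
    -- closed under extensions
    (hext : ∀ (S : ShortComplex A), S.ShortExact →
      (∃ b₁ : B, Nonempty (S.X₁ ≅ ι.obj b₁)) →
      (∃ b₃ : B, Nonempty (S.X₃ ≅ ι.obj b₃)) →
      ∃ b₂ : B, Nonempty (S.X₂ ≅ ι.obj b₂))
    (fshriek : A ⥤ B) (adj : fshriek ⊣ ι) (F : A) :
    Epi (adj.unit.app F) := by
  set e := adj.unit.app F with he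
  apply Abelian.epi_of_cokernel_π_eq_zero
  obtain ⟨b', ⟨φ⟩⟩ := hquot (cokernel e) (fshriek.obj F) (cokernel.π e) inferInstance
  obtain ⟨g, hg⟩ := ι.map_surjective (cokernel.π e ≫ φ.hom)
  have h0 : adj.homEquiv F b' g = adj.homEquiv F b' 0 := by
    simp only [Adjunction.homEquiv_unit, Functor.map_zero, Limits.comp_zero]
    rw [hg, ← he, ← Category.assoc, cokernel.condition, zero_comp]
  have : g = 0 := (adj.homEquiv F b').injective h0
  rw [this, Functor.map_zero] at hg
  have : cokernel.π e ≫ φ.hom = 0 := hg.symm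
  rw [← Category.comp_id (cokernel.π e), ← φ.hom_inv_id, ← Category.assoc, this, zero_comp]
end

section
/- Let f : A → B be an additive functor between essentially small additive categories which is full and essentially surjective. Then the restriction functor f* : Mod–B → Mod–A, given by (f*F)(X) = F(f X), is fully faithful. -/
/-!
STATEMENT 6: Let f : A ⥤ B be an additive functor between essentially small
additive categories which is full and essentially surjective.  Then the
restriction functor f* : Mod–B ⥤ Mod–A, given by (f*F)(X) = F(f X), is fully
faithful.
-/

open CategoryTheory CategoryTheory.Limits

universe v u u'

/-- The category `Mod–A` of right `A`-modules: additive functors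
`Aᵒᵖ ⥤ AddCommGrp`. -/
abbrev ModCat (A : Type u) [Category.{v} A] [Preadditive A] :=
  ObjectProperty.FullSubcategory (fun F : Aᵒᵖ ⥤ AddCommGrpCat.{v} => F.Additive)

/-- The restriction functor `f* : Mod–B ⥤ Mod–A`, `(f*F)(X) = F(f X)`:
precomposition with `f.op`. -/
def restrictMod {A : Type u} [Category.{v} A] [Preadditive A]
    {B : Type u'} [Category.{v} B] [Preadditive B]
    (f : A ⥤ B) [f.Additive] : ModCat B ⥤ ModCat A :=
  ObjectProperty.lift _
    (ObjectProperty.ι _ ⋙ (Functor.whiskeringLeft Aᵒᵖ Bᵒᵖ AddCommGrpCat).obj f.op)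
    (fun F => by
      have : (F.1).Additive := F.2
      dsimp
      infer_instance)

section Aux
set_option linter.unusedSectionVars false

variable {A : Type u} [Category.{v} A] {B : Type u'} [Category.{v} B]
  {E : Type*} [Category E]
  (f : A ⥤ B) [f.Full] [f.EssSurj]

lemma key {F G : Bᵒᵖ ⥤ E} (γ : f.op ⋙ F ⟶ f.op ⋙ G) {a a' : A}
    (g : Opposite.op (f.obj a) ⟶ Opposite.op (f.obj a')) :
    F.map g ≫ γ.app (Opposite.op a') = γ.app (Opposite.op a) ≫ G.map g := by
  obtain ⟨h, rfl⟩ := f.op.map_surjective (X := Opposite.op a) (Y := Opposite.op a') g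
  exact γ.naturality h

lemma conj_indep {F G : Bᵒᵖ ⥤ E} (γ : f.op ⋙ F ⟶ f.op ⋙ G) {b : Bᵒᵖ}
    {a a' : A} (e : f.obj a ≅ b.unop) (e' : f.obj a' ≅ b.unop) :
    F.map e.hom.op ≫ γ.app (Opposite.op a) ≫ G.map e.inv.op =
      F.map e'.hom.op ≫ γ.app (Opposite.op a') ≫ G.map e'.inv.op := by
  have hu := key f γ (a := a') (a' := a) ((e.hom ≫ e'.inv).op)
  have h1 : (e.hom.op : b ⟶ _) = e'.hom.op ≫ (e.hom ≫ e'.inv).op := by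
    rw [← op_comp]; simp
  have h2 : ((e.hom ≫ e'.inv).op ≫ e.inv.op : Opposite.op (f.obj a') ⟶ b)
      = e'.inv.op := by
    rw [← op_comp]; simp
  rw [h1, F.map_comp, Category.assoc, ← Category.assoc (F.map (e.hom ≫ e'.inv).op),
    hu, Category.assoc, ← G.map_comp, h2]

lemma conj_natural {F G : Bᵒᵖ ⥤ E} (γ : f.op ⋙ F ⟶ f.op ⋙ G) {b b' : Bᵒᵖ}
    {a a' : A} (e : f.obj a ≅ b.unop) (e' : f.obj a' ≅ b'.unop) (φ : b ⟶ b') :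
    F.map φ ≫ F.map e'.hom.op ≫ γ.app (Opposite.op a') ≫ G.map e'.inv.op =
      (F.map e.hom.op ≫ γ.app (Opposite.op a) ≫ G.map e.inv.op) ≫ G.map φ := by
  have hv := key f γ (a := a) (a' := a') ((e'.hom ≫ φ.unop ≫ e.inv).op)
  have h1 : (e.hom.op : b ⟶ _) ≫ (e'.hom ≫ φ.unop ≫ e.inv).op = φ ≫ e'.hom.op := by
    rw [← op_comp]
    simp only [Category.assoc, Iso.inv_hom_id, Category.comp_id]
    rw [op_comp, Quiver.Hom.op_unop]
  have h2 : ((e'.hom ≫ φ.unop ≫ e.inv).op : _ ⟶ Opposite.op (f.obj a')) ≫ e'.inv.op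
      = (e.inv.op : _ ⟶ b) ≫ φ := by
    rw [← op_comp]
    simp only [Iso.inv_hom_id_assoc]
    rw [op_comp, Quiver.Hom.op_unop]
  rw [← Category.assoc, ← F.map_comp, ← h1, F.map_comp, Category.assoc,
    reassoc_of% hv, ← G.map_comp, h2, G.map_comp]
  simp only [Category.assoc]

noncomputable def extend {F G : Bᵒᵖ ⥤ E} (γ : f.op ⋙ F ⟶ f.op ⋙ G) : F ⟶ G where
  app b :=
    F.map (f.objObjPreimageIso b.unop).hom.op ≫
      γ.app (Opposite.op (f.objPreimage b.unop)) ≫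
      G.map (f.objObjPreimageIso b.unop).inv.op
  naturality b b' φ :=
    conj_natural f γ (f.objObjPreimageIso b.unop) (f.objObjPreimageIso b'.unop) φ

lemma extend_app {F G : Bᵒᵖ ⥤ E} (γ : f.op ⋙ F ⟶ f.op ⋙ G) (x : A) :
    (extend f γ).app (Opposite.op (f.obj x)) = γ.app (Opposite.op x) := by
  have h := conj_indep f γ (b := Opposite.op (f.obj x))
    (f.objObjPreimageIso (f.obj x)) (Iso.refl (f.obj x))
  show F.map (f.objObjPreimageIso (f.obj x)).hom.op ≫ _ ≫ _ = _
  rw [h]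
  simp

lemma whisker_extend {F G : Bᵒᵖ ⥤ E} (γ : f.op ⋙ F ⟶ f.op ⋙ G) :
    Functor.whiskerLeft f.op (extend f γ) = γ := by
  apply NatTrans.ext
  funext x
  exact extend_app f γ x.unop

lemma faithful_aux {F G : Bᵒᵖ ⥤ E} (α β : F ⟶ G)
    (h : ∀ x : A, α.app (Opposite.op (f.obj x)) = β.app (Opposite.op (f.obj x))) :
    α = β := by
  apply NatTrans.ext
  funext b
  obtain ⟨a, ⟨e⟩⟩ : ∃ a, Nonempty (f.obj a ≅ b.unop) :=
    ⟨f.objPreimage b.unop, ⟨f.objObjPreimageIso b.unop⟩⟩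
  have : IsIso (e.hom.op : b ⟶ Opposite.op (f.obj a)) := by
    exact (inferInstance : IsIso e.op.hom)
  rw [← cancel_mono (G.map (e.hom.op : b ⟶ Opposite.op (f.obj a))),
    ← α.naturality, ← β.naturality, h a]

end Aux

theorem stmt_6 {A : Type u} [Category.{v} A] [Preadditive A]
    [EssentiallySmall.{v} A]
    {B : Type u'} [Category.{v} B] [Preadditive B] [EssentiallySmall.{v} B]
    (f : A ⥤ B) [f.Additive] [f.Full] [f.EssSurj] :
    (restrictMod f).Full ∧ (restrictMod f).Faithful := by
  constructor
  · constructor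
    intro F G γ
    exact ⟨ObjectProperty.homMk (extend f γ.hom), InducedCategory.hom_ext (whisker_extend f γ.hom)⟩
  · constructor
    intro F G α β h
    have h1 : ∀ x : A,
        NatTrans.app (F := F.1) (G := G.1) α.hom (Opposite.op (f.obj x)) =
        NatTrans.app (F := F.1) (G := G.1) β.hom (Opposite.op (f.obj x)) := fun x =>
      congrArg (fun δ : f.op ⋙ F.1 ⟶ f.op ⋙ G.1 => δ.app (Opposite.op x)) (congrArg (·.hom) h)
    exact InducedCategory.hom_ext (faithful_aux f α.hom β.hom h1)
end

section
/- Let F be a homotopy invariant Nisnevich sheaf with transfers over a perfect field. If the contraction F₋₁ vanishes, then F is birationally invariant: F(X) → F(U) is an isomorphism for every dense open immersion U ↪ X of smooth varieties. Conversely, if F is birationally invariant then F₋₁ = 0. -/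
/-!
STATEMENT 18: Let F be a homotopy invariant Nisnevich sheaf with transfers
over a perfect field.  If the contraction F₋₁ vanishes, then F is birationally
invariant: F(X) → F(U) is an isomorphism for every dense open immersion
U ↪ X of smooth varieties.  Conversely, if F is birationally invariant then
F₋₁ = 0.

As in Statement 13, the category of finite correspondences is axiomatised as
an additive category `Cor` with the endofunctors `TA = − × A¹`,
`TGm = − × (A¹∖{0})`, the projection `p : TA ⟶ 𝟭` and the dense open
immersion `q : TGm ⟶ TA`, and a class `denseOpenImm` of dense open
immersions containing the `q.app X`.  The contraction `F₋₁` is a cokernel of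
`F(− × A¹) ⟶ F(− × (A¹∖{0}))`.  The Gersten-type exact sequence
`0 → F(X) → F(F(X)) → ⊕_{x ∈ X⁽¹⁾} F₋₁(F(x))` (valid for homotopy invariant
Nisnevich sheaves with transfers over a perfect field) is encoded by the
boundary data `(Gt, ∂)`: for each dense open immersion `j : U ⟶ X`, a
boundary map `∂ : F(U) ⟶ Gt j` whose kernel is exactly the image of
`F(X) → F(U)`, with `F(X) → F(U)` injective, and `Gt j` a product of values
of the contraction `F₋₁` — so that it vanishes whenever `F₋₁ = 0`.
-/

open CategoryTheory CategoryTheory.Limits Opposite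

universe v u

theorem stmt_18 {Cor : Type u} [Category.{v} Cor] [Preadditive Cor]
    (TA TGm : Cor ⥤ Cor)
    (p : TA ⟶ 𝟭 Cor) (q : TGm ⟶ TA)
    (denseOpenImm : MorphismProperty Cor)
    (hq : ∀ X : Cor, denseOpenImm (q.app X))
    (F : Corᵒᵖ ⥤ AddCommGrpCat.{v}) [F.Additive]
    -- F is homotopy invariant
    (hhi : ∀ X : Cor, IsIso (F.map (p.app X).op))
    -- the contraction F₋₁, as a cokernel of F(− × A¹) ⟶ F(− × Gm)
    (Fm1 : Corᵒᵖ ⥤ AddCommGrpCat.{v})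
    (π : TGm.op ⋙ F ⟶ Fm1)
    (hπ : Functor.whiskerRight (NatTrans.op q) F ≫ π = 0)
    (hcoker : IsColimit (CokernelCofork.ofπ π hπ))
    -- the Gersten exact sequence (uses that the base field is perfect):
    (Gt : ∀ {U X : Cor} (j : U ⟶ X), denseOpenImm j → AddCommGrpCat.{v})
    (bd : ∀ {U X : Cor} (j : U ⟶ X) (hj : denseOpenImm j),
      F.obj (op U) ⟶ Gt j hj)
    (hGmono : ∀ {U X : Cor} (j : U ⟶ X), denseOpenImm j →
      Mono (F.map j.op))
    (hGexact : ∀ {U X : Cor} (j : U ⟶ X) (hj : denseOpenImm j)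
      (a : F.obj (op U)), bd j hj a = 0 ↔ ∃ b, F.map j.op b = a)
    -- the target of the boundary is a product of values of F₋₁
    (hGtarget : (∀ Z : Corᵒᵖ, IsZero (Fm1.obj Z)) →
      ∀ {U X : Cor} (j : U ⟶ X) (hj : denseOpenImm j), IsZero (Gt j hj)) :
    -- F₋₁ = 0 if and only if F is birationally invariant
    (∀ Z : Corᵒᵖ, IsZero (Fm1.obj Z)) ↔
      (∀ {U X : Cor} (j : U ⟶ X), denseOpenImm j → IsIso (F.map j.op)) := by
  constructor
  · intro hz U X j hj
    haveI := hGmono j hj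
    rw [ConcreteCategory.isIso_iff_bijective]
    refine ⟨(AddCommGrpCat.mono_iff_injective _).mp (hGmono j hj), ?_⟩
    intro a
    have h0 : bd j hj = 0 := (hGtarget hz j hj).eq_zero_of_tgt _
    have : bd j hj a = 0 := by rw [h0]; rfl
    exact (hGexact j hj a).mp this
  · intro hbi
    have hiso : IsIso (Functor.whiskerRight (NatTrans.op q) F) := by
      have : ∀ X : Corᵒᵖ, IsIso ((Functor.whiskerRight (NatTrans.op q) F).app X) := fun X =>
        hbi (q.app X.unop) (hq X.unop)
      exact NatIso.isIso_of_isIso_app _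
    have hπ0 : π = 0 := by
      have := hπ
      rw [← IsIso.inv_hom_id_assoc (Functor.whiskerRight (NatTrans.op q) F) π]
      rw [hπ, Limits.comp_zero]
    have hid : 𝟙 Fm1 = 0 := by
      apply Cofork.IsColimit.hom_ext hcoker
      simp [hπ0]
    intro Z
    have : 𝟙 (Fm1.obj Z) = 0 := congrArg (fun t => NatTrans.app t Z) hid
    exact IsZero.of_iso (isZero_zero _) (by
      exact { hom := 0, inv := 0, hom_inv_id := by rw [this, Limits.comp_zero], inv_hom_id := (isZero_zero _).eq_of_src _ _ })
end

section
/- In the triangulated category of effective birational geometric motives DM^o_gm, the Tate object vanishes: Z(1) = 0. Consequently, for every effective geometric motive M, the twist M(1) = M ⊗ Z(1) maps to zero in DM^o_gm, so the thick subcategory of DM^eff_gm generated by the complexes [U] → [X] for dense open immersions contains all motives of the form M(1). -/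
/-!
STATEMENT 19: In the triangulated category of effective birational geometric
motives DM^o_gm, the Tate object vanishes: Z(1) = 0.  Consequently, for every
effective geometric motive M, the twist M(1) = M ⊗ Z(1) maps to zero in
DM^o_gm, so the thick subcategory of DM^eff_gm generated by the complexes
[U] → [X] for dense open immersions contains all motives of the form M(1).

The category `C = DM^o_gm` is axiomatised as a monoidal triangulated
(additive, with shift by ℤ) category; `Z1` is the image of the Tate motive
Z(1), `MP1` and `MA1` are the images of the motives of P¹ and A¹.  The
hypotheses record: the projective bundle decomposition M(P¹) = Z ⊕ Z(1)[2];
that the dense open immersion A¹ ⊂ P¹ becomes invertible in DM^o_gm; the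
A¹-homotopy invariance M(A¹) ≅ Z; and the compatibility that the unit
summand of M(P¹) is the image of M(A¹).  `L : DM^eff_gm ⥤ DM^o_gm` is the
(monoidal) localisation functor, and `TateE` the Tate motive Z(1) of
DM^eff_gm, with L(TateE) ≅ Z1.
-/

open CategoryTheory CategoryTheory.Limits CategoryTheory.MonoidalCategory

universe v v' u u'

theorem stmt_19 {C : Type u} [Category.{v} C] [Preadditive C]
    [MonoidalCategory C] [MonoidalPreadditive C]
    [HasZeroObject C] [HasBinaryBiproducts C] [HasShift C ℤ]
    [∀ n : ℤ, (shiftFunctor C n).Additive]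
    (Z1 MP1 MA1 : C)
    -- M(P¹) = Z ⊕ Z(1)[2]
    (e : MP1 ≅ (𝟙_ C) ⊞ (Z1⟦(2 : ℤ)⟧))
    -- the dense open immersion A¹ ⊂ P¹ is inverted in DM^o_gm
    (j : MA1 ⟶ MP1) (hj : IsIso j)
    -- homotopy invariance: M(A¹) ≅ Z
    (pA : MA1 ⟶ 𝟙_ C) (hpA : IsIso pA)
    -- the unit summand of M(P¹) is the image of M(A¹) = Z
    (hcomp : inv pA ≫ j = biprod.inl ≫ e.inv)
    -- the localisation functor from DM^eff_gm, and the effective Tate motive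
    {E : Type u'} [Category.{v'} E] [MonoidalCategory E]
    (L : E ⥤ C) [L.Monoidal] (TateE : E) (tE : L.obj TateE ≅ Z1) :
    -- Z(1) = 0 in DM^o_gm,
    IsZero Z1 ∧
    -- hence every twist M ⊗ Z(1) vanishes in DM^o_gm,
    (∀ M : C, IsZero (M ⊗ Z1)) ∧
    -- i.e. all motives M(1) of DM^eff_gm are killed by the localisation
    -- DM^eff_gm → DM^o_gm = DM^eff_gm / ⟨[U] → [X] dense open immersions⟩
    (∀ N : E, IsZero (L.obj (N ⊗ TateE))) := by
  -- biprod.inl is an isomorphism, being the composite of isos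
  have hinl : IsIso (biprod.inl : 𝟙_ C ⟶ (𝟙_ C) ⊞ (Z1⟦(2 : ℤ)⟧)) := by
    have : biprod.inl = (inv pA ≫ j) ≫ e.hom := by
      rw [hcomp]; simp
    rw [this]; infer_instance
  -- hence the complementary summand Z1⟦2⟧ is zero
  have hshift : IsZero (Z1⟦(2 : ℤ)⟧) := by
    rw [IsZero.iff_id_eq_zero]
    calc 𝟙 (Z1⟦(2 : ℤ)⟧)
        = biprod.inr ≫ (inv (biprod.inl : 𝟙_ C ⟶ (𝟙_ C) ⊞ (Z1⟦(2 : ℤ)⟧)) ≫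
            biprod.inl) ≫ biprod.snd := by simp
      _ = 0 := by
          rw [Category.assoc, biprod.inl_snd]
          simp
  -- shifting back: Z1 is zero, as the shift functor is additive and faithful
  have hZ1 : IsZero Z1 := by
    rw [IsZero.iff_id_eq_zero]
    apply (shiftFunctor C (2 : ℤ)).map_injective
    rw [CategoryTheory.Functor.map_id, CategoryTheory.Functor.map_zero]
    exact (IsZero.iff_id_eq_zero _).mp hshift
  refine ⟨hZ1, ?_, ?_⟩
  · intro M
    rw [IsZero.iff_id_eq_zero]
    have : 𝟙 (M ⊗ Z1) = 𝟙 M ⊗ₘ 𝟙 Z1 := by simp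
    rw [this, (IsZero.iff_id_eq_zero Z1).mp hZ1]
    simp
  · intro N
    have h1 : IsZero (L.obj N ⊗ Z1) := by
      rw [IsZero.iff_id_eq_zero]
      have : 𝟙 (L.obj N ⊗ Z1) = 𝟙 (L.obj N) ⊗ₘ 𝟙 Z1 := by simp
      rw [this, (IsZero.iff_id_eq_zero Z1).mp hZ1]
      simp
    exact h1.of_iso ((Functor.Monoidal.μIso L N TateE).symm ≪≫
      tensorIso (Iso.refl (L.obj N)) tE)
end
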